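/- arXiv:q-alg/9709041 — 2 statements merged into one kernel-verified Lean document; each statement's English description precedes it below -/
import Mathlib

section
/- Let G be a finite group and let S ⊆ ℂG be a subspace closed under both right multiplication by elements of G and under the Hadamard (pointwise) product, containing Σ_{g∈G} g. If e = Σ_{g∈X} g (for X ⊆ G with 1_G ∈ X) is a primitive idempotent of S with respect to the Hadamard product, then X is a subgroup of G. -/
/-- The Hadamard (coefficientwise) product on the complex group algebra. -/
noncomputable def hadamard {G : Type*} (a b : MonoidAlgebra ℂ G) : MonoidAlgebra ℂ G :=
  MonoidAlgebra.ofCoeff (Finsupp.zipWith (· * ·) (mul_zero 0) a.coeff b.coeff)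

/-- The element `1∘ = Σ_{g ∈ G} g` of the group algebra. -/
noncomputable def hadamardOne (G : Type*) [Fintype G] : MonoidAlgebra ℂ G :=
  ∑ g : G, MonoidAlgebra.single g (1 : ℂ)

/-!
The Hadamard product multiplies coefficientwise, so for finite subsets `A`, `B` the
indicator elements `Σ_{g∈A} g` satisfy `1_A ∘ 1_B = 1_{A∩B}`. Write `e = 1_X`. For `g ∈ X`,
`e g = 1_{Xg}` lies in `S`, hence so do `1_{X∩Xg}` and `1_{X \ Xg} = e - 1_{X∩Xg}`, two
orthogonal idempotents summing to `e`. Since `g = 1·g ∈ X ∩ Xg`, primitivity forces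
`X \ Xg = ∅`, i.e. `X = Xg`. A finite set containing `1` with `Xg = X` for all `g ∈ X` is
closed under products, and `1 ∈ Xg` gives `g⁻¹ ∈ X`.
-/

section GroupAlgebra

variable {G : Type*}

noncomputable def indicator (T : Finset G) : MonoidAlgebra ℂ G :=
  ∑ g ∈ T, MonoidAlgebra.single g (1 : ℂ)

/-- The paper's primitivity of an idempotent `e` of `(S, ∘)`, without requiring `e` itself to be
a nonzero idempotent. -/
def HadamardIndecomposable (S : Submodule ℂ (MonoidAlgebra ℂ G))
    (e : MonoidAlgebra ℂ G) : Prop :=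
  ¬ ∃ a b : MonoidAlgebra ℂ G, a ∈ S ∧ b ∈ S ∧ a ≠ 0 ∧ b ≠ 0 ∧
      hadamard a a = a ∧ hadamard b b = b ∧ hadamard a b = 0 ∧ e = a + b

@[simp]
lemma indicator_empty : indicator (∅ : Finset G) = 0 := Finset.sum_empty

lemma coeff_indicator [DecidableEq G] (T : Finset G) (h : G) :
    (indicator T).coeff h = if h ∈ T then 1 else 0 := by
  simp [indicator, MonoidAlgebra.coeff_sum, Finset.sum_apply', Finsupp.single_apply,
    MonoidAlgebra.coeff_single]

lemma indicator_ne_zero {T : Finset G} (hT : T.Nonempty) : indicator T ≠ 0 := by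
  classical
  obtain ⟨g, hg⟩ := hT
  intro h
  simpa [coeff_indicator, hg] using congrArg (·.coeff g) h

lemma indicator_union [DecidableEq G] {A B : Finset G} (h : Disjoint A B) :
    indicator (A ∪ B) = indicator A + indicator B :=
  Finset.sum_union h

lemma hadamard_indicator [DecidableEq G] (A B : Finset G) :
    hadamard (indicator A) (indicator B) = indicator (A ∩ B) := by
  ext h
  simp only [hadamard, MonoidAlgebra.coeff_ofCoeff, Finsupp.zipWith_apply, coeff_indicator,
    Finset.mem_inter]
  split_ifs <;> simp_all

lemma indicator_mul_single [Group G] [DecidableEq G] (T : Finset G) (g : G) :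
    indicator T * MonoidAlgebra.single g (1 : ℂ) = indicator (T.image (· * g)) := by
  rw [indicator, indicator, Finset.sum_image fun _ _ _ _ => mul_right_cancel, Finset.sum_mul]
  simp [MonoidAlgebra.single_mul_single]

lemma subset_or_disjoint_of_hadamardIndecomposable [DecidableEq G]
    {S : Submodule ℂ (MonoidAlgebra ℂ G)}
    (hHad : ∀ x ∈ S, ∀ y ∈ S, hadamard x y ∈ S) {X Y : Finset G}
    (hX : indicator X ∈ S) (hXind : HadamardIndecomposable S (indicator X))
    (hY : indicator Y ∈ S) : X ⊆ Y ∨ Disjoint X Y := by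
  have hdisj : Disjoint (X ∩ Y) (X \ Y) := (Finset.disjoint_sdiff_inter X Y).symm
  have hsplit : indicator X = indicator (X ∩ Y) + indicator (X \ Y) := by
    rw [← indicator_union hdisj, show X ∩ Y ∪ X \ Y = X from sup_inf_sdiff X Y]
  have hXY : indicator (X ∩ Y) ∈ S := hadamard_indicator X Y ▸ hHad _ hX _ hY
  have hXmY : indicator (X \ Y) ∈ S := by
    simpa [hsplit] using S.sub_mem hX hXY
  by_contra! h
  refine hXind ⟨_, _, hXY, hXmY,
    indicator_ne_zero (Finset.not_disjoint_iff_nonempty_inter.mp h.2),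
    indicator_ne_zero (Finset.sdiff_nonempty.mpr h.1), ?_, ?_, ?_, hsplit⟩
  · rw [hadamard_indicator, Finset.inter_self]
  · rw [hadamard_indicator, Finset.inter_self]
  · rw [hadamard_indicator, Finset.disjoint_iff_inter_eq_empty.mp hdisj, indicator_empty]

end GroupAlgebra

lemma Finset.exists_subgroup_of_image_mul_right_eq {G : Type*} [Group G] [DecidableEq G]
    {X : Finset G} (h1 : (1 : G) ∈ X) (hX : ∀ g ∈ X, X.image (· * g) = X) :
    ∃ H : Subgroup G, (X : Set G) = H := by
  refine ⟨{ carrier := X, mul_mem' := ?_, one_mem' := h1, inv_mem' := ?_ }, rfl⟩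
  · intro a b ha hb
    rw [← hX b hb]
    exact Finset.mem_image_of_mem _ ha
  · intro g hg
    obtain ⟨x, hx, hxg⟩ := Finset.mem_image.mp ((hX g hg).symm ▸ h1 : (1 : G) ∈ X.image (· * g))
    rwa [← eq_inv_of_mul_eq_one_left hxg]

theorem primitiveIdempotent_support_subgroup_general
    (G : Type*) [Group G] (S : Submodule ℂ (MonoidAlgebra ℂ G))
    (hRight : ∀ x ∈ S, ∀ g : G, x * MonoidAlgebra.single g (1 : ℂ) ∈ S)
    (hHad : ∀ x ∈ S, ∀ y ∈ S, hadamard x y ∈ S)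
    (X : Finset G) (hX1 : (1 : G) ∈ X)
    (e : MonoidAlgebra ℂ G) (he : e = ∑ g ∈ X, MonoidAlgebra.single g (1 : ℂ))
    (heS : e ∈ S)
    (hPrim : ¬ ∃ a b : MonoidAlgebra ℂ G, a ∈ S ∧ b ∈ S ∧ a ≠ 0 ∧ b ≠ 0 ∧
      hadamard a a = a ∧ hadamard b b = b ∧ hadamard a b = 0 ∧ e = a + b) :
    ∃ H : Subgroup G, (X : Set G) = (H : Set G) := by
  classical
  change e = indicator X at he
  subst he
  refine Finset.exists_subgroup_of_image_mul_right_eq hX1 fun g hg => ?_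
  have hXg : indicator (X.image (· * g)) ∈ S := indicator_mul_single X g ▸ hRight _ heS g
  have hg' : g ∈ X ∩ X.image (· * g) :=
    Finset.mem_inter.mpr ⟨hg, Finset.mem_image.mpr ⟨1, hX1, one_mul g⟩⟩
  have hsub : X ⊆ X.image (· * g) :=
    (subset_or_disjoint_of_hadamardIndecomposable hHad heS hPrim hXg).resolve_right
      (Finset.not_disjoint_iff_nonempty_inter.mpr ⟨g, hg'⟩)
  exact (Finset.eq_of_subset_of_card_le hsub Finset.card_image_le).symm

/-- if a subspace `S` of `ℂG` is closed under right multiplication by group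
elements and under the Hadamard product and contains `Σ_{g∈G} g`, and
`e = Σ_{g∈X} g` (with `1 ∈ X`) is a primitive idempotent of `(S, ∘)`, then `X` is a
subgroup of `G`. -/
theorem primitiveIdempotent_support_subgroup
    (G : Type*) [Group G] [Fintype G] (S : Submodule ℂ (MonoidAlgebra ℂ G))
    (hRight : ∀ x ∈ S, ∀ g : G, x * MonoidAlgebra.single g (1 : ℂ) ∈ S)
    (hHad : ∀ x ∈ S, ∀ y ∈ S, hadamard x y ∈ S)
    (hOne : hadamardOne G ∈ S)
    (X : Finset G) (hX1 : (1 : G) ∈ X)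
    (e : MonoidAlgebra ℂ G) (he : e = ∑ g ∈ X, MonoidAlgebra.single g (1 : ℂ))
    (heS : e ∈ S) (hIdem : hadamard e e = e) (hne : e ≠ 0)
    (hPrim : ¬ ∃ a b : MonoidAlgebra ℂ G, a ∈ S ∧ b ∈ S ∧ a ≠ 0 ∧ b ≠ 0 ∧
      hadamard a a = a ∧ hadamard b b = b ∧ hadamard a b = 0 ∧ e = a + b) :
    ∃ H : Subgroup G, (X : Set G) = (H : Set G) :=
  primitiveIdempotent_support_subgroup_general G S hRight hHad X hX1 e he heS hPrim
end

section
/- Let G be a finite group, M = ⊕_{χ∈Irr(G)} M_χ the direct sum of one copy of each irreducible complex G-module, with M_1 the trivial module. Let R ⊆ M be a subspace containing M_1 such that π(R ⊗ R) ⊆ R for every G-module homomorphism π : M ⊗ M → M. Then R = ⊕_{χ∈Irr(G)} (R ∩ M_χ). -/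
/-!
The projection of `M` onto a summand `M_χ` is the value of a `G`-homomorphism `M ⊗ M → M`:
`x ⊗ y ↦ φ (x₁) • y_χ`, where `φ` is a linear form on the trivial summand `M_1` (hence
`G`-invariant). Since `M_1 ⊆ R`, pairing a vector `e ∈ M_1` with `φ e = 1` against `r ∈ R`
shows that every component `r_χ` of `r` lies in `R`.
-/

open TensorProduct

/-- The direct sum (product) of a finite family of representations. -/
noncomputable def piRep {k G ι : Type*} [CommSemiring k] [Monoid G] (V : ι → Type*)
    [∀ i, AddCommMonoid (V i)] [∀ i, Module k (V i)]
    (ρ : ∀ i, Representation k G (V i)) : Representation k G (∀ i, V i) where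
  toFun g := LinearMap.pi fun i => (ρ i g).comp (LinearMap.proj i)
  map_one' := by ext v i; simp
  map_mul' g h := by ext v i; simp

namespace Representation

variable {k G M N P : Type*} [CommSemiring k] [Monoid G]
  [AddCommMonoid M] [AddCommMonoid N] [AddCommMonoid P] [Module k M] [Module k N] [Module k P]

theorem lid_comp_map_comp_tprod {σ : Representation k G M} {τ : Representation k G N}
    {υ : Representation k G P} {ℓ : M →ₗ[k] k} {f : N →ₗ[k] P}
    (hℓ : ∀ g, ℓ ∘ₗ σ g = ℓ) (hf : ∀ g, f ∘ₗ τ g = υ g ∘ₗ f) (g : G) :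
    (_root_.TensorProduct.lid k P ∘ₗ _root_.TensorProduct.map ℓ f) ∘ₗ σ.tprod τ g =
      υ g ∘ₗ _root_.TensorProduct.lid k P ∘ₗ _root_.TensorProduct.map ℓ f := by
  ext x y
  have hx : ℓ (σ g x) = ℓ x := LinearMap.congr_fun (hℓ g) x
  have hy : f (τ g y) = υ g (f y) := LinearMap.congr_fun (hf g) y
  simp [hx, hy]

end Representation

section piRep

variable {k G ι : Type*} [CommSemiring k] [Monoid G] {V : ι → Type*}
  [∀ i, AddCommMonoid (V i)] [∀ i, Module k (V i)] (ρ : ∀ i, Representation k G (V i))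

theorem piRep_apply_apply (g : G) (x : ∀ i, V i) (i : ι) : piRep V ρ g x i = ρ i g (x i) :=
  rfl

theorem proj_comp_piRep (g : G) (i : ι) :
    LinearMap.proj i ∘ₗ piRep V ρ g = ρ i g ∘ₗ LinearMap.proj i :=
  rfl

theorem piRep_comp_single [DecidableEq ι] (g : G) (i : ι) :
    piRep V ρ g ∘ₗ LinearMap.single k V i = LinearMap.single k V i ∘ₗ ρ i g := by
  ext v j
  by_cases h : j = i
  · subst h; simp [piRep_apply_apply]
  · simp [piRep_apply_apply, Pi.single_eq_of_ne h]

end piRep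

theorem Submodule.eq_iSup_inf_range_single {k ι : Type*} [Semiring k] [Fintype ι] [DecidableEq ι]
    {V : ι → Type*} [∀ i, AddCommMonoid (V i)] [∀ i, Module k (V i)]
    {R : Submodule k (∀ i, V i)} (hR : ∀ r ∈ R, ∀ i, Pi.single i (r i) ∈ R) :
    R = ⨆ i, R ⊓ LinearMap.range (LinearMap.single k V i) := by
  refine le_antisymm (fun r hr => ?_) (iSup_le fun i => inf_le_left)
  rw [← Finset.univ_sum_single r]
  exact Submodule.sum_mem _ fun i _ =>
    Submodule.mem_iSup_of_mem i ⟨hR r hr i, r i, rfl⟩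

theorem single_apply_mem_of_forall_tensor_hom_mem {k G ι : Type*} [Field k] [Monoid G]
    [DecidableEq ι] {V : ι → Type*} [∀ i, AddCommGroup (V i)] [∀ i, Module k (V i)]
    {ρ : ∀ i, Representation k G (V i)} {i₀ : ι} [Nontrivial (V i₀)]
    (hTriv : ∀ (g : G) (v : V i₀), ρ i₀ g v = v)
    {R : Submodule k (∀ i, V i)} (hR1 : LinearMap.range (LinearMap.single k V i₀) ≤ R)
    (hClosed : ∀ π : ((∀ i, V i) ⊗[k] (∀ i, V i)) →ₗ[k] (∀ i, V i),
      (∀ g : G, π ∘ₗ ((piRep V ρ).tprod (piRep V ρ) g) = (piRep V ρ g) ∘ₗ π) →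
      ∀ x ∈ R, ∀ y ∈ R, π (x ⊗ₜ[k] y) ∈ R)
    {r : ∀ i, V i} (hr : r ∈ R) (i : ι) : Pi.single i (r i) ∈ R := by
  obtain ⟨e, he⟩ := exists_ne (0 : V i₀)
  obtain ⟨φ, hφ⟩ := Module.Projective.exists_dual_eq_one k he
  have hequiv := Representation.lid_comp_map_comp_tprod
    (σ := piRep V ρ) (τ := piRep V ρ) (υ := piRep V ρ)
    (ℓ := φ ∘ₗ LinearMap.proj i₀) (f := LinearMap.single k V i ∘ₗ LinearMap.proj i)
    (fun g => by ext x; simp [piRep_apply_apply, hTriv])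
    (fun g => by rw [LinearMap.comp_assoc, proj_comp_piRep, ← LinearMap.comp_assoc,
      ← piRep_comp_single, LinearMap.comp_assoc])
  simpa [hφ] using hClosed _ hequiv _ (hR1 ⟨e, rfl⟩) r hr

theorem invariant_subspace_decomposes_general
    (G : Type*) [Group G]
    (ι : Type*) [Fintype ι] [DecidableEq ι] (V : ι → Type*)
    [∀ i, AddCommGroup (V i)] [∀ i, Module ℂ (V i)]
    [∀ i, Nontrivial (V i)]
    (ρ : ∀ i, Representation ℂ G (V i))
    (i₀ : ι) (hTriv : ∀ (g : G) (v : V i₀), ρ i₀ g v = v)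
    (R : Submodule ℂ (∀ i, V i))
    (hR1 : LinearMap.range (LinearMap.single ℂ V i₀) ≤ R)
    (hClosed : ∀ π : ((∀ i, V i) ⊗[ℂ] (∀ i, V i)) →ₗ[ℂ] (∀ i, V i),
      (∀ g : G, π ∘ₗ ((piRep V ρ).tprod (piRep V ρ) g) = (piRep V ρ g) ∘ₗ π) →
      ∀ x ∈ R, ∀ y ∈ R, π (x ⊗ₜ[ℂ] y) ∈ R) :
    R = ⨆ i, R ⊓ LinearMap.range (LinearMap.single ℂ V i) :=
  Submodule.eq_iSup_inf_range_single fun _ hr i =>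
    single_apply_mem_of_forall_tensor_hom_mem hTriv hR1 hClosed hr i

/-- with `M = ⊕_χ M_χ` the multiplicity-free sum of all irreducible
complex `G`-modules (trivial summand at `i₀`) and `R ⊆ M` a subspace containing the
trivial summand with `π(R ⊗ R) ⊆ R` for all `G`-homomorphisms `π : M ⊗ M → M`, the
subspace `R` decomposes as `R = ⊕_χ (R ∩ M_χ)`. -/
theorem invariant_subspace_decomposes
    (G : Type*) [Group G] [Fintype G]
    (ι : Type*) [Fintype ι] [DecidableEq ι] (V : ι → Type*)
    [∀ i, AddCommGroup (V i)] [∀ i, Module ℂ (V i)]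
    [∀ i, FiniteDimensional ℂ (V i)] [∀ i, Nontrivial (V i)]
    (ρ : ∀ i, Representation ℂ G (V i))
    (hSimple : ∀ i, ∀ p : Submodule ℂ (V i),
      (∀ g : G, ∀ v ∈ p, ρ i g v ∈ p) → p = ⊥ ∨ p = ⊤)
    (hNonIso : ∀ i j, i ≠ j →
      ¬ ∃ f : V i ≃ₗ[ℂ] V j, ∀ (g : G) (v : V i), f (ρ i g v) = ρ j g (f v))
    (hAll : ∀ (U : Type*) [AddCommGroup U] [Module ℂ U] [FiniteDimensional ℂ U]
      [Nontrivial U] (σ : Representation ℂ G U),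
      (∀ p : Submodule ℂ U, (∀ g : G, ∀ v ∈ p, σ g v ∈ p) → p = ⊥ ∨ p = ⊤) →
      ∃ i, ∃ f : U ≃ₗ[ℂ] V i, ∀ (g : G) (v : U), f (σ g v) = ρ i g (f v))
    (i₀ : ι) (hTriv : ∀ (g : G) (v : V i₀), ρ i₀ g v = v)
    (hDim : Module.finrank ℂ (V i₀) = 1)
    (R : Submodule ℂ (∀ i, V i))
    (hR1 : LinearMap.range (LinearMap.single ℂ V i₀) ≤ R)
    (hClosed : ∀ π : ((∀ i, V i) ⊗[ℂ] (∀ i, V i)) →ₗ[ℂ] (∀ i, V i),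
      (∀ g : G, π ∘ₗ ((piRep V ρ).tprod (piRep V ρ) g) = (piRep V ρ g) ∘ₗ π) →
      ∀ x ∈ R, ∀ y ∈ R, π (x ⊗ₜ[ℂ] y) ∈ R) :
    R = ⨆ i, R ⊓ LinearMap.range (LinearMap.single ℂ V i) :=
  invariant_subspace_decomposes_general G ι V ρ i₀ hTriv R hR1 hClosed
end
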